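/- arXiv:1908.11187 — 4 statements merged into one kernel-verified Lean document; each statement's English description precedes it below -/
import Mathlib

section
/- For all real numbers a, b and all α in (0,2), it holds that | |a|^α + |b|^α - |a-b|^α | ≤ 2 |a|^{α/2} |b|^{α/2}. -/
lemma subadd_rpow {x y p : ℝ} (hx : 0 ≤ x) (hy : 0 ≤ y) (hp : 0 ≤ p) (hp1 : p ≤ 1) :
    (x + y) ^ p ≤ x ^ p + y ^ p := by
  lift x to NNReal using hx
  lift y to NNReal using hy
  have h := NNReal.rpow_add_le_add_rpow x y hp hp1
  exact_mod_cast h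

lemma sub_rpow {x y p : ℝ} (hy : 0 ≤ y) (hyx : y ≤ x) (hp : 0 ≤ p) (hp1 : p ≤ 1) :
    x ^ p - y ^ p ≤ (x - y) ^ p := by
  have h := subadd_rpow (x := x - y) (y := y) (by linarith) hy hp hp1
  rw [sub_add_cancel] at h
  linarith

lemma sq_rpow {x p : ℝ} (hx : 0 ≤ x) : (x ^ p) ^ (2:ℕ) = x ^ (2 * p) := by
  rw [← Real.rpow_natCast (x ^ p) 2, ← Real.rpow_mul hx, mul_comm]
  norm_num

theorem stmt_0 (a b α : ℝ) (hα0 : 0 < α) (hα2 : α < 2) :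
    |(|a| ^ α + |b| ^ α - |a - b| ^ α)| ≤ 2 * |a| ^ (α / 2) * |b| ^ (α / 2) := by
  set p := α / 2 with hp
  have hp0 : 0 ≤ p := by positivity
  have hp1 : p ≤ 1 := by rw [hp]; linarith
  have hα : α = 2 * p := by rw [hp]; ring
  have hx : 0 ≤ |a| := abs_nonneg a
  have hy : 0 ≤ |b| := abs_nonneg b
  have hz : 0 ≤ |a - b| := abs_nonneg _
  have hz1 : |a - b| ≤ |a| + |b| := abs_sub a b
  have hz2 : |(|a| - |b|)| ≤ |a - b| := abs_abs_sub_abs_le_abs_sub a b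
  have hxα : |a| ^ α = (|a| ^ p) ^ (2:ℕ) := by rw [sq_rpow hx, ← hα]
  have hyα : |b| ^ α = (|b| ^ p) ^ (2:ℕ) := by rw [sq_rpow hy, ← hα]
  have hzα : |a - b| ^ α = (|a - b| ^ p) ^ (2:ℕ) := by rw [sq_rpow hz, ← hα]
  have hxp : 0 ≤ |a| ^ p := Real.rpow_nonneg hx p
  have hyp : 0 ≤ |b| ^ p := Real.rpow_nonneg hy p
  have hzp : 0 ≤ |a - b| ^ p := Real.rpow_nonneg hz p
  rw [abs_le]
  constructor
  · -- z^α ≤ (x^p + y^p)^2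
    have h1 : |a - b| ^ p ≤ |a| ^ p + |b| ^ p :=
      (Real.rpow_le_rpow hz hz1 hp0).trans (subadd_rpow hx hy hp0 hp1)
    rw [hxα, hyα, hzα]
    nlinarith [sq_nonneg (|a| ^ p + |b| ^ p - |a - b| ^ p)]
  · -- (x^p - y^p)^2 ≤ z^α
    have h2 : |(|a| ^ p - |b| ^ p)| ≤ |a - b| ^ p := by
      rcases le_total |b| |a| with h | h
      · rw [abs_of_nonneg (by
          have := Real.rpow_le_rpow hy h hp0; linarith)]
        calc |a| ^ p - |b| ^ p ≤ (|a| - |b|) ^ p := sub_rpow hy h hp0 hp1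
          _ ≤ |a - b| ^ p := Real.rpow_le_rpow (by linarith) (by
              rw [abs_of_nonneg (by linarith)] at hz2; exact hz2) hp0
      · rw [abs_of_nonpos (by
          have := Real.rpow_le_rpow hx h hp0; linarith)]
        calc -(|a| ^ p - |b| ^ p) = |b| ^ p - |a| ^ p := by ring
          _ ≤ (|b| - |a|) ^ p := sub_rpow hx h hp0 hp1
          _ ≤ |a - b| ^ p := Real.rpow_le_rpow (by linarith) (by
              rw [abs_of_nonpos (by linarith), neg_sub] at hz2; exact hz2) hp0
    rw [hxα, hyα, hzα]
    have h3 : (|a| ^ p - |b| ^ p) ^ (2:ℕ) ≤ (|a - b| ^ p) ^ (2:ℕ) := by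
      calc (|a| ^ p - |b| ^ p) ^ (2:ℕ) = |(|a| ^ p - |b| ^ p)| ^ (2:ℕ) := (sq_abs _).symm
        _ ≤ (|a - b| ^ p) ^ (2:ℕ) := pow_le_pow_left₀ (abs_nonneg _) h2 2
    nlinarith
end

section
/- Let α > 0 and a, b ≥ 0. Then ∫₀¹ ∫₀¹ [(a s₁ + b s₂)^α − |a s₁ − b s₂|^α] / (s₁ s₂) ds₁ ds₂ ≥ C_α · min(a^α, b^α), where C_α = (2/α) ∫₀¹ [(1+u)^α − (1−u)^α]/u du. -/
/-!
Substituting `x = a s₁`, `y = b s₂` turns the left-hand side into the integral of the kernel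
`K(x, y) = ((x + y)^α - |x - y|^α) / (x y)` over `(0, a] × (0, b]`. The kernel is nonnegative, so
shrinking the rectangle to the square `(0, m]²`, `m = min a b`, can only decrease the integral.
On the square, symmetry of `K` gives twice the integral over the triangle `y ≤ x`, and homogeneity
of degree `α - 2` makes the inner integral `∫₀ˣ K(x, y) dy` equal to `x^(α-1) ∫₀¹ K(1, u) du`, whose
integral over `(0, m]` is `(m^α / α) ∫₀¹ K(1, u) du`. Fubini applies because
`K(x, y) ≲ (x y)^(p/2 - 1)` with `p = min α 1`.
-/

open MeasureTheory Set Function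

lemma rpow_add_sub_rpow_sub_le_of_one_le {α x y : ℝ} (hα : 1 ≤ α) (hy : 0 ≤ y) (hyx : y ≤ x) :
    (x + y) ^ α - (x - y) ^ α ≤ 2 * α * y * (x + y) ^ (α - 1) := by
  rcases (add_nonneg (hy.trans hyx) hy).eq_or_lt with hzero | hpos
  · obtain rfl : y = 0 := by linarith
    simp
  have bernoulli := one_add_mul_self_le_rpow_one_add
    (s := -(2 * y) / (x + y)) (by rw [neg_div, neg_le_neg_iff, div_le_one hpos]; linarith) hα
  rw [show 1 + -(2 * y) / (x + y) = (x - y) / (x + y) by field_simp; ring,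
    Real.div_rpow (by linarith) hpos.le, le_div_iff₀ (by positivity)] at bernoulli
  have hexpand : (1 + α * (-(2 * y) / (x + y))) * (x + y) ^ α
      = (x + y) ^ α - 2 * α * y * ((x + y) ^ α / (x + y)) := by ring
  rw [Real.rpow_sub_one hpos.ne']
  linarith

lemma rpow_le_mul_rpow_div_two {x y q : ℝ} (hy : 0 ≤ y) (hyx : y ≤ x) (hq : 0 ≤ q) :
    y ^ q ≤ (x * y) ^ (q / 2) := by
  calc y ^ q = (y * y) ^ (q / 2) := by
        rw [← sq, ← Real.rpow_natCast_mul hy]; congr 1; push_cast; ring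
    _ ≤ (x * y) ^ (q / 2) := by gcongr

lemma rpow_add_sub_rpow_abs_sub_nonneg {α x y : ℝ} (hα : 0 ≤ α) (hx : 0 ≤ x) (hy : 0 ≤ y) :
    0 ≤ (x + y) ^ α - |x - y| ^ α :=
  sub_nonneg.2 <| Real.rpow_le_rpow (abs_nonneg _) (abs_le.2 ⟨by linarith, by linarith⟩) hα

lemma rpow_add_sub_rpow_abs_sub_le {α x y : ℝ} (hα : 0 < α) (hx : 0 ≤ x) (hy : 0 ≤ y) :
    (x + y) ^ α - |x - y| ^ α ≤
      (2 ^ α + 2 * α) * (x + y) ^ (α - min α 1) * (x * y) ^ (min α 1 / 2) := by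
  wlog hyx : y ≤ x generalizing x y
  · have := this hy hx (le_of_not_ge hyx)
    rwa [add_comm y x, abs_sub_comm y x, mul_comm y x] at this
  rw [abs_of_nonneg (sub_nonneg.2 hyx)]
  rcases le_total α 1 with hα1 | hα1
  · rw [min_eq_left hα1, sub_self, Real.rpow_zero, mul_one]
    have subadd := Real.rpow_add_le_add_rpow (sub_nonneg.2 hyx) (by positivity : 0 ≤ 2 * y)
      hα.le hα1
    rw [show x - y + 2 * y = x + y by ring] at subadd
    calc (x + y) ^ α - (x - y) ^ α ≤ (2 * y) ^ α := by linarith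
      _ = 2 ^ α * y ^ α := Real.mul_rpow zero_le_two hy
      _ ≤ (2 ^ α + 2 * α) * (x * y) ^ (α / 2) := by
        gcongr
        · linarith
        · exact rpow_le_mul_rpow_div_two hy hyx hα.le
  · rw [min_eq_right hα1]
    have hy' : y ≤ (x * y) ^ (1 / 2 : ℝ) := by
      simpa using rpow_le_mul_rpow_div_two hy hyx zero_le_one
    calc (x + y) ^ α - (x - y) ^ α ≤ 2 * α * y * (x + y) ^ (α - 1) :=
          rpow_add_sub_rpow_sub_le_of_one_le hα1 hy hyx
      _ ≤ 2 * α * (x * y) ^ (1 / 2 : ℝ) * (x + y) ^ (α - 1) := by gcongr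
      _ ≤ (2 ^ α + 2 * α) * (x + y) ^ (α - 1) * (x * y) ^ (1 / 2 : ℝ) := by
        rw [mul_right_comm]
        gcongr
        linarith [show (0 : ℝ) < 2 ^ α by positivity]

lemma integral_Ioc_zero_one_comp_mul_left (f : ℝ → ℝ) {c : ℝ} (hc : 0 < c) :
    ∫ s in Ioc 0 1, f (c * s) = c⁻¹ * ∫ t in Ioc 0 c, f t := by
  rw [← intervalIntegral.integral_of_le zero_le_one, ← intervalIntegral.integral_of_le hc.le,
    intervalIntegral.integral_comp_mul_left f hc.ne', mul_zero, mul_one, smul_eq_mul]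

lemma integral_Ioc_Ioc_comp_mul_mul (f : ℝ → ℝ → ℝ) {a b : ℝ} (ha : 0 < a) (hb : 0 < b) :
    ∫ s in Ioc 0 1, ∫ t in Ioc 0 1, a * b * f (a * s) (b * t)
      = ∫ x in Ioc 0 a, ∫ y in Ioc 0 b, f x y := by
  have inner (s : ℝ) :
      ∫ t in Ioc 0 1, a * b * f (a * s) (b * t) = a * ∫ y in Ioc 0 b, f (a * s) y := by
    rw [integral_const_mul, integral_Ioc_zero_one_comp_mul_left (f (a * s)) hb, mul_assoc,
      mul_inv_cancel_left₀ hb.ne']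
  simp_rw [inner]
  rw [integral_const_mul, integral_Ioc_zero_one_comp_mul_left (fun x => ∫ y in Ioc 0 b, f x y) ha,
    mul_inv_cancel_left₀ ha.ne']

lemma integral_integral_le_of_subset {X Y : Type*} [MeasurableSpace X] [MeasurableSpace Y]
    {μ : Measure X} {ν : Measure Y} [SFinite μ] [SFinite ν] {f : X → Y → ℝ}
    {s s' : Set X} {t t' : Set Y} (hf : IntegrableOn (uncurry f) (s ×ˢ t) (μ.prod ν))
    (hf₀ : ∀ x ∈ s, ∀ y ∈ t, 0 ≤ f x y) (hs : MeasurableSet s) (ht : MeasurableSet t)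
    (hs' : s' ⊆ s) (ht' : t' ⊆ t) :
    ∫ x in s', ∫ y in t', f x y ∂ν ∂μ ≤ ∫ x in s, ∫ y in t, f x y ∂ν ∂μ := by
  have hsub : s' ×ˢ t' ⊆ s ×ˢ t := prod_mono hs' ht'
  calc ∫ x in s', ∫ y in t', f x y ∂ν ∂μ = ∫ q in s' ×ˢ t', uncurry f q ∂μ.prod ν :=
        (setIntegral_prod _ (hf.mono_set hsub)).symm
    _ ≤ ∫ q in s ×ˢ t, uncurry f q ∂μ.prod ν := by
        refine setIntegral_mono_set hf ?_ hsub.eventuallyLE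
        filter_upwards [ae_restrict_mem (hs.prod ht)] with q hq
        exact hf₀ _ hq.1 _ hq.2
    _ = ∫ x in s, ∫ y in t, f x y ∂ν ∂μ := setIntegral_prod _ hf

lemma setIntegral_Ioc_indicator_Iic (g : ℝ → ℝ) {a b x : ℝ} (hx : x ≤ b) :
    ∫ y in Ioc a b, (Iic x).indicator g y = ∫ y in Ioc a x, g y := by
  rw [setIntegral_indicator measurableSet_Iic, Ioc_inter_Iic, inf_eq_right.2 hx]

lemma setIntegral_Ioc_indicator_Iio (g : ℝ → ℝ) {a b x : ℝ} (hx : x ≤ b) :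
    ∫ y in Ioc a b, (Iio x).indicator g y = ∫ y in Ioc a x, g y := by
  have hinter : Ioc a b ∩ Iio x = Ioo a x := by
    ext y
    simp only [mem_inter_iff, mem_Ioc, mem_Iio, mem_Ioo]
    exact ⟨fun h => ⟨h.1.1, h.2⟩, fun h => ⟨⟨h.1, h.2.le.trans hx⟩, h.2⟩⟩
  rw [setIntegral_indicator measurableSet_Iio, hinter, integral_Ioc_eq_integral_Ioo]

lemma integral_Ioc_Ioc_eq_two_mul_of_symm {f : ℝ → ℝ → ℝ} {a b : ℝ}
    (hf : IntegrableOn (uncurry f) (Ioc a b ×ˢ Ioc a b)) (hsymm : ∀ x y, f x y = f y x) :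
    ∫ x in Ioc a b, ∫ y in Ioc a b, f x y = 2 * ∫ x in Ioc a b, ∫ y in Ioc a x, f x y := by
  rw [Measure.volume_eq_prod] at hf
  set below : ℝ → ℝ → ℝ := fun x y => (Iic x).indicator (f x) y
  set above : ℝ → ℝ → ℝ := fun x y => (Iio y).indicator (f y) x
  have hdiag : MeasurableSet {q : ℝ × ℝ | q.2 ≤ q.1} :=
    measurableSet_le measurable_snd measurable_fst
  have hbelow : IntegrableOn (uncurry below) (Ioc a b ×ˢ Ioc a b) (volume.prod volume) := by
    have : uncurry below = {q : ℝ × ℝ | q.2 ≤ q.1}.indicator (uncurry f) := by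
      ext ⟨x, y⟩
      simp [below, indicator]
    exact this ▸ hf.indicator hdiag
  have habove : IntegrableOn (uncurry above) (Ioc a b ×ˢ Ioc a b) (volume.prod volume) := by
    have : uncurry above = {q : ℝ × ℝ | q.2 ≤ q.1}ᶜ.indicator (uncurry f) := by
      ext ⟨x, y⟩
      by_cases h : y ≤ x <;> simp [above, indicator, hsymm x y, h]
    exact this ▸ hf.indicator hdiag.compl
  calc ∫ x in Ioc a b, ∫ y in Ioc a b, f x y
      = ∫ x in Ioc a b, ∫ y in Ioc a b, below x y + above x y := by
        congr! 3 with x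
        funext y
        by_cases h : y ≤ x <;> simp [below, above, indicator, hsymm x y, h]
    _ = ∫ q in Ioc a b ×ˢ Ioc a b, uncurry below q + uncurry above q ∂volume.prod volume :=
        (setIntegral_prod _ (hbelow.add habove)).symm
    _ = ∫ q in Ioc a b ×ˢ Ioc a b, uncurry below q ∂volume.prod volume
          + ∫ q in Ioc a b ×ˢ Ioc a b, uncurry above q ∂volume.prod volume :=
        integral_add hbelow habove
    _ = (∫ x in Ioc a b, ∫ y in Ioc a b, below x y)
          + ∫ y in Ioc a b, ∫ x in Ioc a b, above x y := by
        rw [setIntegral_prod _ hbelow, setIntegral_prod _ habove]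
        simp only [uncurry_apply_pair]
        rw [integral_integral_swap (f := above) (by rwa [Measure.prod_restrict])]
    _ = 2 * ∫ x in Ioc a b, ∫ y in Ioc a x, f x y := by
        rw [setIntegral_congr_fun measurableSet_Ioc
            fun x hx => setIntegral_Ioc_indicator_Iic (f x) hx.2,
          setIntegral_congr_fun measurableSet_Ioc
            fun y hy => setIntegral_Ioc_indicator_Iio (f y) hy.2]
        ring

/-- After the substitution `x = a s₁`, `y = b s₂`, the integrand of the theorem is
`a * b * gapKernel α x y`, and its constant is `∫ u in Ioc 0 1, gapKernel α 1 u`. -/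
noncomputable def gapKernel (α x y : ℝ) : ℝ := ((x + y) ^ α - |x - y| ^ α) / (x * y)

lemma gapKernel_comm (α x y : ℝ) : gapKernel α x y = gapKernel α y x := by
  rw [gapKernel, gapKernel, add_comm, abs_sub_comm, mul_comm]

lemma gapKernel_nonneg {α x y : ℝ} (hα : 0 ≤ α) (hx : 0 ≤ x) (hy : 0 ≤ y) :
    0 ≤ gapKernel α x y :=
  div_nonneg (rpow_add_sub_rpow_abs_sub_nonneg hα hx hy) (mul_nonneg hx hy)

lemma gapKernel_mul_mul {α c x y : ℝ} (hc : 0 < c) (hx : 0 ≤ x) (hy : 0 ≤ y) :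
    gapKernel α (c * x) (c * y) = c ^ (α - 2) * gapKernel α x y := by
  rw [gapKernel, gapKernel, ← mul_add, ← mul_sub, abs_mul, abs_of_pos hc,
    Real.mul_rpow hc.le (by positivity), Real.mul_rpow hc.le (abs_nonneg _),
    Real.rpow_sub hc, Real.rpow_two]
  field_simp

lemma measurable_gapKernel (α : ℝ) : Measurable (uncurry (gapKernel α)) := by
  unfold gapKernel uncurry
  fun_prop

lemma gapKernel_le {α c d x y : ℝ} (hα : 0 < α) (hx : x ∈ Ioc 0 c) (hy : y ∈ Ioc 0 d) :
    gapKernel α x y ≤ (2 ^ α + 2 * α) * (c + d) ^ (α - min α 1)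
      * x ^ (min α 1 / 2 - 1) * y ^ (min α 1 / 2 - 1) := by
  obtain ⟨hx₀, hxc⟩ := hx
  obtain ⟨hy₀, hyd⟩ := hy
  have hxy : 0 < x * y := mul_pos hx₀ hy₀
  have hp : 0 ≤ α - min α 1 := sub_nonneg.2 (min_le_left α 1)
  calc gapKernel α x y
      ≤ (2 ^ α + 2 * α) * (x + y) ^ (α - min α 1) * ((x * y) ^ (min α 1 / 2) / (x * y)) := by
        rw [gapKernel, ← mul_div_assoc]
        gcongr
        exact rpow_add_sub_rpow_abs_sub_le hα hx₀.le hy₀.le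
    _ ≤ (2 ^ α + 2 * α) * (c + d) ^ (α - min α 1) * ((x * y) ^ (min α 1 / 2) / (x * y)) := by
        gcongr
    _ = _ := by
        rw [← Real.rpow_sub_one hxy.ne', Real.mul_rpow hx₀.le hy₀.le]
        ring

lemma integrableOn_gapKernel {α : ℝ} (hα : 0 < α) (c d : ℝ) :
    IntegrableOn (uncurry (gapKernel α)) (Ioc 0 c ×ˢ Ioc 0 d) := by
  have hr : -1 < min α 1 / 2 - 1 := by linarith [lt_min hα one_pos]
  have hpow (e : ℝ) : IntegrableOn (fun t : ℝ => t ^ (min α 1 / 2 - 1)) (Ioc 0 e) :=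
    (intervalIntegral.intervalIntegrable_rpow' hr).1
  rw [IntegrableOn, Measure.volume_eq_prod, ← Measure.prod_restrict]
  refine Integrable.mono'
    (((hpow c).const_mul ((2 ^ α + 2 * α) * (c + d) ^ (α - min α 1))).mul_prod (hpow d))
    (measurable_gapKernel α).aestronglyMeasurable ?_
  rw [Measure.prod_restrict]
  filter_upwards [ae_restrict_mem (measurableSet_Ioc.prod measurableSet_Ioc)] with q hq
  rw [uncurry_def, Real.norm_eq_abs, abs_of_nonneg (gapKernel_nonneg hα.le hq.1.1.le hq.2.1.le)]
  exact gapKernel_le hα hq.1 hq.2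

lemma integral_gapKernel_Ioc_self {α x : ℝ} (hx : 0 < x) :
    ∫ t in Ioc 0 x, gapKernel α x t = x ^ (α - 1) * ∫ u in Ioc 0 1, gapKernel α 1 u := by
  have hscale := integral_Ioc_zero_one_comp_mul_left (gapKernel α x) hx
  have hhom : ∀ u ∈ Ioc (0 : ℝ) 1, gapKernel α x (x * u) = x ^ (α - 2) * gapKernel α 1 u := by
    intro u hu
    simpa using gapKernel_mul_mul (α := α) hx zero_le_one hu.1.le
  rw [setIntegral_congr_fun measurableSet_Ioc hhom, integral_const_mul] at hscale
  rw [eq_inv_mul_iff_mul_eq₀ hx.ne'] at hscale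
  rw [← hscale, ← mul_assoc, show α - 1 = 1 + (α - 2) by ring, Real.rpow_add hx, Real.rpow_one]

lemma integral_gapKernel_square {α m : ℝ} (hα : 0 < α) (hm : 0 ≤ m) :
    ∫ x in Ioc 0 m, ∫ y in Ioc 0 m, gapKernel α x y
      = 2 / α * (∫ u in Ioc 0 1, gapKernel α 1 u) * m ^ α := by
  rw [integral_Ioc_Ioc_eq_two_mul_of_symm (integrableOn_gapKernel hα m m) (gapKernel_comm α),
    setIntegral_congr_fun measurableSet_Ioc fun x hx => integral_gapKernel_Ioc_self hx.1,
    integral_mul_const, ← intervalIntegral.integral_of_le hm,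
    integral_rpow (Or.inl (by linarith)), sub_add_cancel, Real.zero_rpow hα.ne']
  ring

theorem stmt_3 (α a b : ℝ) (hα : 0 < α) (ha : 0 ≤ a) (hb : 0 ≤ b) :
    (∫ s₁ in Set.Ioc (0:ℝ) 1, ∫ s₂ in Set.Ioc (0:ℝ) 1,
        ((a * s₁ + b * s₂) ^ α - |a * s₁ - b * s₂| ^ α) / (s₁ * s₂))
      ≥ (2 / α * ∫ u in Set.Ioc (0:ℝ) 1, ((1 + u) ^ α - (1 - u) ^ α) / u)
          * min (a ^ α) (b ^ α) := by
  have hmin : min (a ^ α) (b ^ α) = min a b ^ α := by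
    rcases le_total a b with h | h
    · rw [min_eq_left h, min_eq_left (Real.rpow_le_rpow ha h hα.le)]
    · rw [min_eq_right h, min_eq_right (Real.rpow_le_rpow hb h hα.le)]
  rw [hmin, ge_iff_le]
  rcases (le_min ha hb).eq_or_lt with hm | hm
  · rw [← hm, Real.zero_rpow hα.ne', mul_zero]
    refine setIntegral_nonneg measurableSet_Ioc fun s₁ hs₁ => ?_
    refine setIntegral_nonneg measurableSet_Ioc fun s₂ hs₂ => div_nonneg ?_ ?_
    · exact rpow_add_sub_rpow_abs_sub_nonneg hα.le (mul_nonneg ha hs₁.1.le)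
        (mul_nonneg hb hs₂.1.le)
    · exact mul_nonneg hs₁.1.le hs₂.1.le
  obtain ⟨ha₀, hb₀⟩ := lt_min_iff.1 hm
  have hlhs (s₁ s₂ : ℝ) : ((a * s₁ + b * s₂) ^ α - |a * s₁ - b * s₂| ^ α) / (s₁ * s₂)
      = a * b * gapKernel α (a * s₁) (b * s₂) := by
    rw [gapKernel, mul_mul_mul_comm, mul_div_assoc', mul_div_mul_left _ _ (mul_pos ha₀ hb₀).ne']
  have hconst : ∫ u in Ioc (0:ℝ) 1, ((1 + u) ^ α - (1 - u) ^ α) / u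
      = ∫ u in Ioc 0 1, gapKernel α 1 u := by
    refine setIntegral_congr_fun measurableSet_Ioc fun u hu => ?_
    rw [gapKernel, abs_of_nonneg (sub_nonneg.2 hu.2), one_mul]
  simp_rw [hlhs]
  rw [integral_Ioc_Ioc_comp_mul_mul (gapKernel α) ha₀ hb₀, hconst,
    ← integral_gapKernel_square hα hm.le]
  exact integral_integral_le_of_subset (integrableOn_gapKernel hα a b)
    (fun x hx y hy => gapKernel_nonneg hα.le hx.1.le hy.1.le) measurableSet_Ioc measurableSet_Ioc
    (Ioc_subset_Ioc_right (min_le_left a b)) (Ioc_subset_Ioc_right (min_le_right a b))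
end

section
/- Let m : ℝ → [0,∞) be measurable with ∫_ℝ m(x)^α dx < ∞, and suppose m is nonincreasing on (a,∞) for some a > 0 and ∫_a^∞ t·m(t)^α dt = ∞. Then ∫_ℝ ∫_ℝ min(m(x)^α, m(t)^α) dx dt = ∞. -/
/-!
For `t > a` the function `m ^ α` is at least `m t ^ α` on `(a, t]`, so the inner integral at `t`
is at least `(t - a) * m t ^ α`. Integrating over `t > a` leaves `∫_a^∞ (t - a) m(t)^α dt`, which
differs from the divergent `∫_a^∞ t m(t)^α dt` by at most `a ‖m‖_α^α < ∞`.
-/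

open MeasureTheory Set

theorem lintegral_ofReal_sub_mul_eq_top {μ : Measure ℝ} {g : ℝ → ℝ} (a : ℝ)
    (hg0 : ∀ t, 0 ≤ g t) (hg : AEMeasurable g μ) (hfin : ∫⁻ t, ENNReal.ofReal (g t) ∂μ ≠ ⊤)
    (hdiv : ∫⁻ t, ENNReal.ofReal (t * g t) ∂μ = ⊤) :
    ∫⁻ t, ENNReal.ofReal ((t - a) * g t) ∂μ = ⊤ := by
  have hsplit : ∀ t, ENNReal.ofReal (t * g t)
      ≤ ENNReal.ofReal ((t - a) * g t) + ENNReal.ofReal a * ENNReal.ofReal (g t) := fun t =>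
    calc ENNReal.ofReal (t * g t) = ENNReal.ofReal ((t - a) * g t + a * g t) := by ring_nf
      _ ≤ _ := by rw [← ENNReal.ofReal_mul' (hg0 t)]; exact ENNReal.ofReal_add_le
  have hle : ⊤ ≤ ∫⁻ t, ENNReal.ofReal ((t - a) * g t) ∂μ
      + ENNReal.ofReal a * ∫⁻ t, ENNReal.ofReal (g t) ∂μ := by
    rw [← hdiv, ← lintegral_const_mul' _ _ ENNReal.ofReal_ne_top,
      ← lintegral_add_right' _ (hg.ennreal_ofReal.const_mul _)]
    exact lintegral_mono hsplit
  by_contra hne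
  exact (ENNReal.add_ne_top.2 ⟨hne, ENNReal.mul_ne_top ENNReal.ofReal_ne_top hfin⟩)
    (top_le_iff.1 hle)

theorem ofReal_sub_mul_le_lintegral_min {g : ℝ → ℝ} {a t : ℝ} (hanti : AntitoneOn g (Ioi a))
    (ht : a < t) : ENNReal.ofReal ((t - a) * g t) ≤ ∫⁻ x, ENNReal.ofReal (min (g x) (g t)) :=
  calc ENNReal.ofReal ((t - a) * g t) = ∫⁻ _ in Ioc a t, ENNReal.ofReal (g t) := by
        rw [setLIntegral_const, Real.volume_Ioc, ENNReal.ofReal_mul (by linarith), mul_comm]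
    _ ≤ ∫⁻ x in Ioc a t, ENNReal.ofReal (min (g x) (g t)) :=
        setLIntegral_mono' measurableSet_Ioc fun x hx => by
          rw [min_eq_right (hanti hx.1 ht hx.2)]
    _ ≤ ∫⁻ x, ENNReal.ofReal (min (g x) (g t)) := setLIntegral_le_lintegral _ _

theorem lintegral_Ioi_sub_mul_le_lintegral_lintegral_min {g : ℝ → ℝ} {a : ℝ}
    (hanti : AntitoneOn g (Ioi a)) :
    ∫⁻ t in Ioi a, ENNReal.ofReal ((t - a) * g t)
      ≤ ∫⁻ t, ∫⁻ x, ENNReal.ofReal (min (g x) (g t)) :=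
  (setLIntegral_mono' measurableSet_Ioi fun _ ht => ofReal_sub_mul_le_lintegral_min hanti ht).trans
    (setLIntegral_le_lintegral _ _)

theorem stmt_6_general (α a : ℝ) (hα0 : 0 < α)
    (m : ℝ → ℝ) (hm0 : ∀ x, 0 ≤ m x) (hmeas : Measurable m)
    (hLα : Integrable (fun x => m x ^ α))
    (hmono : AntitoneOn m (Set.Ioi a))
    (hdiv : ∫⁻ t in Set.Ioi a, ENNReal.ofReal (t * m t ^ α) = ⊤) :
    ∫⁻ t : ℝ, ∫⁻ x : ℝ, ENNReal.ofReal (min (m x ^ α) (m t ^ α)) = ⊤ := by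
  have hanti : AntitoneOn (fun x => m x ^ α) (Ioi a) := fun _ hx _ hy hxy =>
    Real.rpow_le_rpow (hm0 _) (hmono hx hy hxy) hα0.le
  have hfin : ∫⁻ t in Ioi a, ENNReal.ofReal (m t ^ α) ≠ ⊤ :=
    ((setLIntegral_le_lintegral _ _).trans_lt hLα.lintegral_lt_top).ne
  have hkey := lintegral_ofReal_sub_mul_eq_top a (fun t => Real.rpow_nonneg (hm0 t) α)
    (hmeas.pow_const α).aemeasurable hfin hdiv
  exact top_unique (hkey ▸ lintegral_Ioi_sub_mul_le_lintegral_lintegral_min hanti)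

theorem stmt_6 (α a : ℝ) (hα0 : 0 < α) (hα2 : α < 2) (ha : 0 < a)
    (m : ℝ → ℝ) (hm0 : ∀ x, 0 ≤ m x) (hmeas : Measurable m)
    (hLα : Integrable (fun x => m x ^ α))
    (hmono : AntitoneOn m (Set.Ioi a))
    (hdiv : ∫⁻ t in Set.Ioi a, ENNReal.ofReal (t * m t ^ α) = ⊤) :
    ∫⁻ t : ℝ, ∫⁻ x : ℝ, ENNReal.ofReal (min (m x ^ α) (m t ^ α)) = ⊤ :=
  stmt_6_general α a hα0 m hm0 hmeas hLα hmono hdiv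
end

section
/- Let (X,Y) be a bivariate max-stable random vector with α-Fréchet margins (α > 0) given by P(X ≤ u, Y ≤ v) = exp(−E[max((W_X/u)^α, (W_Y/v)^α)]) for a nonnegative random vector (W_X, W_Y) with E[W_X^α] = E[W_Y^α] = 1, and let θ = E[max(W_X^α, W_Y^α)]. Then for all u, v > 0: exp(−u^{−α} − v^{−α} + (2−θ)/max(u,v)^α) ≤ P(X ≤ u, Y ≤ v) ≤ exp(−u^{−α} − v^{−α} + (2−θ)/min(u,v)^α). -/
open MeasureTheory

theorem stmt_8 {Ω : Type*} [MeasurableSpace Ω] (P : Measure Ω) [IsProbabilityMeasure P]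
    (α : ℝ) (hα : 0 < α) (WX WY : Ω → ℝ)
    (hWX0 : ∀ ω, 0 ≤ WX ω) (hWY0 : ∀ ω, 0 ≤ WY ω)
    (hWXmeas : Measurable WX) (hWYmeas : Measurable WY)
    (hWX1 : ∫ ω, WX ω ^ α ∂P = 1) (hWY1 : ∫ ω, WY ω ^ α ∂P = 1)
    (hintmax : Integrable (fun ω => max (WX ω ^ α) (WY ω ^ α)) P)
    (θ : ℝ) (hθ : θ = ∫ ω, max (WX ω ^ α) (WY ω ^ α) ∂P)
    (F : ℝ → ℝ → ℝ)
    (hF : ∀ u v, 0 < u → 0 < v →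
      F u v = Real.exp (-(∫ ω, max ((WX ω / u) ^ α) ((WY ω / v) ^ α) ∂P)))
    (u v : ℝ) (hu : 0 < u) (hv : 0 < v) :
    Real.exp (-u ^ (-α) - v ^ (-α) + (2 - θ) / max u v ^ α) ≤ F u v ∧
    F u v ≤ Real.exp (-u ^ (-α) - v ^ (-α) + (2 - θ) / min u v ^ α) := by
  set a := u ^ α with ha_def
  set b := v ^ α with hb_def
  have ha : 0 < a := Real.rpow_pos_of_pos hu α
  have hb : 0 < b := Real.rpow_pos_of_pos hv α
  set A := fun ω => WX ω ^ α with hA_def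
  set B := fun ω => WY ω ^ α with hB_def
  have hA0 : ∀ ω, 0 ≤ A ω := fun ω => Real.rpow_nonneg (hWX0 ω) α
  have hB0 : ∀ ω, 0 ≤ B ω := fun ω => Real.rpow_nonneg (hWY0 ω) α
  have hAm : Measurable A := (Real.continuous_rpow_const hα.le).measurable.comp hWXmeas
  have hBm : Measurable B := (Real.continuous_rpow_const hα.le).measurable.comp hWYmeas
  have hmax0 : ∀ ω, 0 ≤ max (A ω) (B ω) := fun ω => le_trans (hA0 ω) (le_max_left _ _)
  have hIA : Integrable A P := by
    refine hintmax.mono hAm.aestronglyMeasurable (ae_of_all _ fun ω => ?_)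
    rw [Real.norm_eq_abs, Real.norm_eq_abs, abs_of_nonneg (hA0 ω), abs_of_nonneg (hmax0 ω)]
    exact le_max_left _ _
  have hIB : Integrable B P := by
    refine hintmax.mono hBm.aestronglyMeasurable (ae_of_all _ fun ω => ?_)
    rw [Real.norm_eq_abs, Real.norm_eq_abs, abs_of_nonneg (hB0 ω), abs_of_nonneg (hmax0 ω)]
    exact le_max_right _ _
  have hImin : Integrable (fun ω => min (A ω) (B ω)) P := by
    refine hIA.mono (hAm.min hBm).aestronglyMeasurable (ae_of_all _ fun ω => ?_)
    rw [Real.norm_eq_abs, Real.norm_eq_abs,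
      abs_of_nonneg (le_min (hA0 ω) (hB0 ω)), abs_of_nonneg (hA0 ω)]
    exact min_le_left _ _
  have hmin_eq : ∫ ω, min (A ω) (B ω) ∂P = 2 - θ := by
    have heq : (fun ω => min (A ω) (B ω))
        = fun ω => A ω + B ω - max (A ω) (B ω) := by
      funext ω
      have := min_add_max (A ω) (B ω)
      linarith
    have hIAB : Integrable (fun ω => A ω + B ω) P := hIA.add hIB
    rw [heq, integral_sub hIAB hintmax, integral_add hIA hIB, hWX1, hWY1, hθ]
    ring
  -- the scaled min function
  set m := fun ω => min (A ω / a) (B ω / b) with hm_def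
  have hImin' : Integrable m P := by
    refine (hIA.div_const a).mono ((hAm.div_const a).min (hBm.div_const b)).aestronglyMeasurable
      (ae_of_all _ fun ω => ?_)
    rw [Real.norm_eq_abs, Real.norm_eq_abs,
      abs_of_nonneg (le_min (div_nonneg (hA0 ω) ha.le) (div_nonneg (hB0 ω) hb.le)),
      abs_of_nonneg (div_nonneg (hA0 ω) ha.le)]
    exact min_le_left _ _
  set J := ∫ ω, m ω ∂P with hJ_def
  have hI : ∫ ω, max ((WX ω / u) ^ α) ((WY ω / v) ^ α) ∂P = 1 / a + 1 / b - J := by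
    have heq : (fun ω => max ((WX ω / u) ^ α) ((WY ω / v) ^ α))
        = fun ω => A ω / a + B ω / b - m ω := by
      funext ω
      rw [Real.div_rpow (hWX0 ω) hu.le, Real.div_rpow (hWY0 ω) hv.le]
      have := min_add_max (A ω / a) (B ω / b)
      simp only [hm_def, hA_def, hB_def] at *
      linarith
    have hIAB' : Integrable (fun ω => A ω / a + B ω / b) P :=
      (hIA.div_const a).add (hIB.div_const b)
    rw [heq, integral_sub hIAB' hImin',
      integral_add (hIA.div_const a) (hIB.div_const b), integral_div, integral_div,
      hWX1, hWY1]
  have hJl : (2 - θ) / max a b ≤ J := by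
    have hle : ∫ ω, min (A ω) (B ω) / max a b ∂P ≤ J := by
      refine integral_mono (hImin.div_const _) hImin' fun ω => ?_
      refine le_min ?_ ?_
      · exact div_le_div₀ (hA0 ω) (min_le_left _ _) ha (le_max_left _ _)
      · exact div_le_div₀ (hB0 ω) (min_le_right _ _) hb (le_max_right _ _)
    rwa [integral_div, hmin_eq] at hle
  have hJu : J ≤ (2 - θ) / min a b := by
    have hle : J ≤ ∫ ω, min (A ω) (B ω) / min a b ∂P := by
      refine integral_mono hImin' (hImin.div_const _) fun ω => ?_
      rcases le_total (A ω) (B ω) with h | h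
      · rw [min_eq_left h]
        calc m ω ≤ A ω / a := min_le_left _ _
          _ ≤ A ω / min a b :=
            div_le_div_of_nonneg_left (hA0 ω) (lt_min ha hb) (min_le_left _ _)
      · rw [min_eq_right h]
        calc m ω ≤ B ω / b := min_le_right _ _
          _ ≤ B ω / min a b :=
            div_le_div_of_nonneg_left (hB0 ω) (lt_min ha hb) (min_le_right _ _)
    rwa [integral_div, hmin_eq] at hle
  have hmaxab : max u v ^ α = max a b := by
    rcases le_total u v with h | h
    · rw [max_eq_right h, max_eq_right (Real.rpow_le_rpow hu.le h hα.le)]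
    · rw [max_eq_left h, max_eq_left (Real.rpow_le_rpow hv.le h hα.le)]
  have hminab : min u v ^ α = min a b := by
    rcases le_total u v with h | h
    · rw [min_eq_left h, min_eq_left (Real.rpow_le_rpow hu.le h hα.le)]
    · rw [min_eq_right h, min_eq_right (Real.rpow_le_rpow hv.le h hα.le)]
  have hun : u ^ (-α) = 1 / a := by
    rw [Real.rpow_neg hu.le, ha_def, one_div]
  have hvn : v ^ (-α) = 1 / b := by
    rw [Real.rpow_neg hv.le, hb_def, one_div]
  rw [hF u v hu hv, hI, hmaxab, hminab, hun, hvn]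
  constructor
  · apply Real.exp_le_exp.mpr; linarith
  · apply Real.exp_le_exp.mpr; linarith
end
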